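/- The 2-dimensional EACPs C₁ (with h·r = h) and C₂ (with h·r = (1/2)(h + r)) are not isomorphic as K-algebras: there is no linear bijection φ : K² → K² with φ(x ·₁ y) = φ(x) ·₂ φ(y) for all x,y, where ·₁ and ·₂ denote the multiplications of C₁ and C₂. (Indeed (C₁²)·(C₁²) = 0 while (C₂²)·(C₂²) ≠ 0.) -/

import Mathlib

/-- Multiplication of the 2-dimensional EACP `C(a,b)` on `K × K` with natural basis
`h = (1,0)`, `r = (0,1)`: `h·r = r·h = (1/2)(a•h + b•r)`, `h·h = r·r = 0`. -/
def eacpMul2 {K : Type*} [Field K] (a b : K) (p q : K × K) : K × K :=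
  ((1 / 2 : K) * (q.2 * p.1 + p.2 * q.1) * a, (1 / 2 : K) * (q.2 * p.1 + p.2 * q.1) * b)

/-- Two bilinear multiplications on `K × K` give isomorphic algebras if some linear
bijection intertwines them. -/
def IsAlgIso2 {K : Type*} [Field K] (m₁ m₂ : K × K → K × K → K × K) : Prop :=
  ∃ φ : (K × K) ≃ₗ[K] (K × K), ∀ x y, φ (m₁ x y) = m₂ (φ x) (φ y)

/-!
In `C₁` every product lies on the line `K • h`, and `h · h = 0`; so a product of two products
vanishes and `C₁` has no nonzero idempotent (`e = e·e = (e·e)·(e·e) = 0`). In `C₂` the element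
`h + r` is idempotent, and an isomorphism would carry it back to a nonzero idempotent of `C₁`.
-/

def HasNonzeroIdempotent {K : Type*} [Field K] (m : K × K → K × K → K × K) : Prop :=
  ∃ e : K × K, e ≠ 0 ∧ m e e = e

theorem IsAlgIso2.hasNonzeroIdempotent_of_right {K : Type*} [Field K]
    {m₁ m₂ : K × K → K × K → K × K} (hiso : IsAlgIso2 m₁ m₂)
    (he : HasNonzeroIdempotent m₂) : HasNonzeroIdempotent m₁ := by
  obtain ⟨φ, hφ⟩ := hiso
  obtain ⟨e, he0, hee⟩ := he
  refine ⟨φ.symm e, by simpa using he0, φ.injective ?_⟩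
  rw [hφ, φ.apply_symm_apply, hee]

theorem eacpMul2_zero_mul_mul {K : Type*} [Field K] (a : K) (p q p' q' : K × K) :
    eacpMul2 a 0 (eacpMul2 a 0 p q) (eacpMul2 a 0 p' q') = 0 := by
  simp [eacpMul2]

theorem not_hasNonzeroIdempotent_eacpMul2_zero {K : Type*} [Field K] (a : K) :
    ¬ HasNonzeroIdempotent (eacpMul2 a 0) := by
  rintro ⟨e, he0, hee⟩
  apply he0
  rw [← hee, ← hee, eacpMul2_zero_mul_mul]

theorem hasNonzeroIdempotent_eacpMul2_self {K : Type*} [Field K] (h2 : (2 : K) ≠ 0)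
    {a : K} (ha : a ≠ 0) : HasNonzeroIdempotent (eacpMul2 a a) := by
  refine ⟨(a⁻¹, a⁻¹), by simp [ha], ?_⟩
  simp only [eacpMul2, Prod.mk.injEq, and_self]
  field_simp
  ring

theorem eacp2_C1_not_iso_C2 {K : Type*} [Field K] (h2 : (2 : K) ≠ 0) :
    ¬ IsAlgIso2 (eacpMul2 (2 : K) (0 : K)) (eacpMul2 (1 : K) (1 : K)) := fun hiso =>
  not_hasNonzeroIdempotent_eacpMul2_zero 2
    (hiso.hasNonzeroIdempotent_of_right (hasNonzeroIdempotent_eacpMul2_self h2 one_ne_zero))
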